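/- arXiv:1901.09859 — 7 statements merged into one kernel-verified Lean document; each statement's English description precedes it below -/
import Mathlib

section
/- If G is a graph with a unique maximum open packing U, then every leaf (vertex of degree 1) of G belongs to U. -/
variable {V : Type*}

/-- A set of vertices is an open packing if the open neighborhoods of distinct
vertices in it are pairwise disjoint. -/
def IsOpenPacking (G : SimpleGraph V) (S : Set V) : Prop :=
  S.Pairwise fun u v => Disjoint (G.neighborSet u) (G.neighborSet v)

/-- The open packing number: the maximum cardinality of an open packing. -/
noncomputable def openPackingNumber (G : SimpleGraph V) : ℕ :=
  sSup {n | ∃ S : Finset V, IsOpenPacking G ↑S ∧ S.card = n}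

/-- `U` is the unique maximum open packing of `G`. -/
def HasUniqueMaxOpenPacking (G : SimpleGraph V) (U : Finset V) : Prop :=
  IsOpenPacking G ↑U ∧ U.card = openPackingNumber G ∧
    ∀ S : Finset V, IsOpenPacking G ↑S → S.card = openPackingNumber G → S = U

theorem stmt_0 [Fintype V] (G : SimpleGraph V) [DecidableRel G.Adj]
    (U : Finset V) (hU : HasUniqueMaxOpenPacking G U)
    (v : V) (hv : G.degree v = 1) : v ∈ U := by
  classical
  by_contra hvU
  obtain ⟨hpack, hcard, huniq⟩ := hU
  -- the unique neighbor w of v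
  rw [SimpleGraph.degree, Finset.card_eq_one] at hv
  obtain ⟨w, hw⟩ := hv
  have hNv : G.neighborSet v = {w} := by
    have := congrArg (fun s : Finset V => (s : Set V)) hw
    simpa [SimpleGraph.neighborFinset] using this
  have hbdd : BddAbove {n | ∃ S : Finset V, IsOpenPacking G ↑S ∧ S.card = n} := by
    refine ⟨Fintype.card V, fun n hn => ?_⟩
    obtain ⟨S, _, hc⟩ := hn
    exact hc ▸ Finset.card_le_univ S
  -- insert v U is not an open packing
  have hnot : ¬ IsOpenPacking G ↑(insert v U) := by
    intro h
    have hle : (insert v U).card ≤ openPackingNumber G :=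
      le_csSup hbdd ⟨insert v U, h, rfl⟩
    rw [Finset.card_insert_of_notMem hvU] at hle
    omega
  -- extract a violating pair; one endpoint must be v
  have hviol : ∃ u ∈ U, ¬ Disjoint (G.neighborSet u) (G.neighborSet v) := by
    by_contra hc
    push_neg at hc
    apply hnot
    intro a ha b hb hab
    simp only [Finset.coe_insert, Set.mem_insert_iff, Finset.mem_coe] at ha hb
    rcases ha with rfl | ha
    · rcases hb with rfl | hb
      · exact absurd rfl hab
      · exact ((hc b hb).symm)
    · rcases hb with rfl | hb
      · exact hc a ha
      · exact hpack ha hb hab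
  obtain ⟨u, huU, hud⟩ := hviol
  have hwu : w ∈ G.neighborSet u := by
    obtain ⟨x, hx1, hx2⟩ := Set.not_disjoint_iff.mp hud
    rw [hNv] at hx2
    rwa [hx2] at hx1
  -- the swapped set
  set S : Finset V := insert v (U.erase u) with hS
  have hvS : v ∉ U.erase u := fun h => hvU (Finset.mem_of_mem_erase h)
  have hSpack : IsOpenPacking G ↑S := by
    intro a ha b hb hab
    simp only [hS, Finset.coe_insert, Set.mem_insert_iff, Finset.mem_coe,
      Finset.mem_erase] at ha hb
    have key : ∀ y, y ∈ U → y ≠ u → Disjoint (G.neighborSet v) (G.neighborSet y) := by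
      intro y hy hyu
      rw [hNv, Set.disjoint_singleton_left]
      intro hwy
      have hd := hpack (Finset.mem_coe.mpr hy) (Finset.mem_coe.mpr huU) hyu
      exact hd.ne_of_mem hwy hwu rfl
    rcases ha with rfl | ⟨hau, haU⟩
    · rcases hb with rfl | ⟨hbu, hbU⟩
      · exact absurd rfl hab
      · exact key b hbU hbu
    · rcases hb with rfl | ⟨hbu, hbU⟩
      · exact (key a haU hau).symm
      · exact hpack (Finset.mem_coe.mpr haU) (Finset.mem_coe.mpr hbU) hab
  have hScard : S.card = U.card := by
    rw [hS, Finset.card_insert_of_notMem hvS, Finset.card_erase_of_mem huU]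
    have : 1 ≤ U.card := Finset.card_pos.mpr ⟨u, huU⟩
    omega
  have := huniq S hSpack (hScard.trans hcard)
  have hvmem : v ∈ S := Finset.mem_insert_self _ _
  rw [this] at hvmem
  exact hvU hvmem
end

section
/- If G is a graph with a unique maximum open packing, then G has no strong support vertices, i.e., no vertex of G is adjacent to two distinct leaves. -/
variable {V : Type*}

lemma aux_nbhd [Fintype V] (G : SimpleGraph V) [DecidableRel G.Adj]
    {l v : V} (hd : G.degree l = 1) (hadj : G.Adj v l) : G.neighborSet l = {v} := by
  have h1 : (G.neighborFinset l).card = 1 := hd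
  obtain ⟨a, ha⟩ := Finset.card_eq_one.mp h1
  have hv : v ∈ G.neighborFinset l := by simpa using hadj.symm
  rw [ha, Finset.mem_singleton] at hv
  subst hv
  ext x
  simp only [SimpleGraph.mem_neighborSet, Set.mem_singleton_iff]
  constructor
  · intro hx
    have hx' : x ∈ G.neighborFinset l := by simpa using hx
    rw [ha, Finset.mem_singleton] at hx'
    exact hx'
  · rintro rfl; exact hadj.symm

lemma aux_bdd [Fintype V] (G : SimpleGraph V) :
    BddAbove {n | ∃ S : Finset V, IsOpenPacking G ↑S ∧ S.card = n} := by
  refine ⟨Fintype.card V, ?_⟩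
  rintro n ⟨S, _, rfl⟩
  exact Finset.card_le_univ S

lemma aux_swap [Fintype V] [DecidableEq V] (G : SimpleGraph V) [DecidableRel G.Adj]
    {U : Finset V} (hU : HasUniqueMaxOpenPacking G U)
    {u l v : V} (huU : u ∈ U) (huv : G.Adj u v)
    (hNl : G.neighborSet l = {v}) (hlu : l ≠ u) : False := by
  obtain ⟨hpack, hcard, huniq⟩ := hU
  have huniq_adj : ∀ w ∈ U, G.Adj w v → w = u := by
    intro w hw hwv
    by_contra hne
    have hd := hpack (by exact_mod_cast hw) (by exact_mod_cast huU) hne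
    exact Set.disjoint_left.mp hd (by simpa using hwv) (by simpa using huv)
  have hlU : l ∉ U := by
    intro hl
    have hvl : v ∈ G.neighborSet l := by rw [hNl]; exact rfl
    exact hlu (huniq_adj l hl ((SimpleGraph.mem_neighborSet G l v).mp hvl))
  have hS : IsOpenPacking G ↑(insert l (U.erase u)) := by
    intro a ha b hb hab
    have ha' : a = l ∨ (a ∈ U ∧ a ≠ u) := by
      simpa [Finset.mem_insert, Finset.mem_erase] using ha
    have hb' : b = l ∨ (b ∈ U ∧ b ≠ u) := by
      simpa [Finset.mem_insert, Finset.mem_erase] using hb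
    have key : ∀ w, w ≠ u → w ∈ U → v ∉ G.neighborSet w := by
      intro w hwu hwU hv
      exact hwu (huniq_adj w hwU ((SimpleGraph.mem_neighborSet G w v).mp hv))
    rcases ha' with rfl | ⟨haU, hau⟩
    · rcases hb' with rfl | ⟨hbU, hbu⟩
      · exact absurd rfl hab
      · rw [hNl, Set.disjoint_singleton_left]
        exact key b hbu hbU
    · rcases hb' with rfl | ⟨hbU, hbu⟩
      · rw [hNl, Set.disjoint_singleton_right]
        exact key a hau haU
      · exact hpack (by exact_mod_cast haU) (by exact_mod_cast hbU) hab
  have hlE : l ∉ U.erase u := fun h => hlU (Finset.mem_of_mem_erase h)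
  have hcardS : (insert l (U.erase u)).card = U.card := by
    rw [Finset.card_insert_of_notMem hlE, Finset.card_erase_of_mem huU]
    have : 1 ≤ U.card := Finset.card_pos.mpr ⟨u, huU⟩
    omega
  have hSU := huniq _ hS (hcardS.trans hcard)
  have : l ∈ U := hSU ▸ Finset.mem_insert_self l _
  exact hlU this

theorem stmt_1 [Fintype V] (G : SimpleGraph V) [DecidableRel G.Adj]
    (U : Finset V) (hU : HasUniqueMaxOpenPacking G U)
    (v l₁ l₂ : V) (h1 : G.Adj v l₁) (h2 : G.Adj v l₂)
    (hl1 : G.degree l₁ = 1) (hl2 : G.degree l₂ = 1) : l₁ = l₂ := by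
  classical
  by_contra hne
  have hN1 := aux_nbhd G hl1 h1
  have hN2 := aux_nbhd G hl2 h2
  by_cases hex : ∃ u ∈ U, G.Adj u v
  · obtain ⟨u, huU, huv⟩ := hex
    by_cases h : u = l₁
    · exact aux_swap G hU huU huv hN2 (fun e => hne ((h ▸ e).symm ▸ rfl))
    · exact aux_swap G hU huU huv hN1 (fun e => h e.symm)
  · have hl1U : l₁ ∉ U := fun h => hex ⟨l₁, h, h1.symm⟩
    have hS : IsOpenPacking G ↑(insert l₁ U) := by
      intro a ha b hb hab
      have ha' : a = l₁ ∨ a ∈ U := by simpa using ha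
      have hb' : b = l₁ ∨ b ∈ U := by simpa using hb
      have key : ∀ w ∈ U, v ∉ G.neighborSet w := by
        intro w hwU hv
        exact hex ⟨w, hwU, (SimpleGraph.mem_neighborSet G w v).mp hv⟩
      rcases ha' with rfl | haU
      · rcases hb' with rfl | hbU
        · exact absurd rfl hab
        · rw [hN1, Set.disjoint_singleton_left]; exact key b hbU
      · rcases hb' with rfl | hbU
        · rw [hN1, Set.disjoint_singleton_right]; exact key a haU
        · exact hU.1 (by exact_mod_cast haU) (by exact_mod_cast hbU) hab
    have hle : (insert l₁ U).card ≤ openPackingNumber G :=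
      le_csSup (aux_bdd G) ⟨_, hS, rfl⟩
    rw [Finset.card_insert_of_notMem hl1U] at hle
    have := hU.2.1
    omega
end

section
/- Let G be a graph with leaves ℓ₁ and ℓ₂ having support vertices y₁ and y₂ respectively, where N(y₁) = {ℓ₁, x} and N(y₂) = {ℓ₂, x} for some vertex x. Then G does not have a unique maximum open packing. -/
variable {V : Type*}

lemma card_le_opn [Fintype V] (G : SimpleGraph V) (S : Finset V)
    (h : IsOpenPacking G ↑S) : S.card ≤ openPackingNumber G :=
  le_csSup ⟨Fintype.card V, by rintro n ⟨S, -, rfl⟩; exact S.card_le_univ⟩ ⟨S, h, rfl⟩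

lemma swap_packing [DecidableEq V] (G : SimpleGraph V) (U : Finset V)
    (hU : IsOpenPacking G ↑U) (u₀ w : V) (hw : w ∉ U)
    (hd : ∀ u ∈ U, u ≠ u₀ → Disjoint (G.neighborSet w) (G.neighborSet u)) :
    IsOpenPacking G ↑(insert w (U.erase u₀)) := by
  intro a ha b hb hab
  rw [Finset.mem_coe, Finset.mem_insert, Finset.mem_erase] at ha hb
  rcases ha with rfl | ⟨ha0, haU⟩
  · rcases hb with rfl | ⟨hb0, hbU⟩
    · exact absurd rfl hab
    · exact hd b hbU hb0
  · rcases hb with rfl | ⟨hb0, hbU⟩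
    · exact (hd a haU ha0).symm
    · exact hU (Finset.mem_coe.2 haU) (Finset.mem_coe.2 hbU) hab

lemma no_swap [Fintype V] [DecidableEq V] (G : SimpleGraph V) (U : Finset V)
    (hU : HasUniqueMaxOpenPacking G U) (u₀ w : V)
    (hu₀ : u₀ ∈ U) (hw : w ∉ U)
    (hd : ∀ u ∈ U, u ≠ u₀ → Disjoint (G.neighborSet w) (G.neighborSet u)) : False := by
  obtain ⟨hp, hc, huniq⟩ := hU
  have hpack := swap_packing G U hp u₀ w hw hd
  have hcard : (insert w (U.erase u₀)).card = U.card := by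
    rw [Finset.card_insert_of_notMem (fun h => hw (Finset.mem_of_mem_erase h)),
      Finset.card_erase_of_mem hu₀]
    exact Nat.succ_pred_eq_of_pos (Finset.card_pos.2 ⟨u₀, hu₀⟩)
  have heq := huniq _ hpack (by rw [hcard, hc])
  have : w ∈ U := heq ▸ Finset.mem_insert_self w _
  exact hw this

theorem stmt_3 [Fintype V] [DecidableEq V] (G : SimpleGraph V) [DecidableRel G.Adj]
    (ℓ₁ ℓ₂ y₁ y₂ x : V) (hne : ℓ₁ ≠ ℓ₂)
    (hl1 : G.degree ℓ₁ = 1) (hl2 : G.degree ℓ₂ = 1)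
    (h1 : G.Adj ℓ₁ y₁) (h2 : G.Adj ℓ₂ y₂)
    (hN1 : G.neighborFinset y₁ = {ℓ₁, x})
    (hN2 : G.neighborFinset y₂ = {ℓ₂, x}) :
    ¬ ∃ U : Finset V, HasUniqueMaxOpenPacking G U := by
  rintro ⟨U, hU⟩
  have hadj1 : ∀ a, G.Adj y₁ a ↔ (a = ℓ₁ ∨ a = x) := fun a => by
    rw [← SimpleGraph.mem_neighborFinset, hN1]; simp
  have hadj2 : ∀ a, G.Adj y₂ a ↔ (a = ℓ₂ ∨ a = x) := fun a => by
    rw [← SimpleGraph.mem_neighborFinset, hN2]; simp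
  have hx1 : G.Adj y₁ x := (hadj1 x).2 (Or.inr rfl)
  have hx2 : G.Adj y₂ x := (hadj2 x).2 (Or.inr rfl)
  have hNl1 : G.neighborFinset ℓ₁ = {y₁} := by
    obtain ⟨a, ha⟩ := Finset.card_eq_one.1
      ((SimpleGraph.card_neighborFinset_eq_degree G ℓ₁).trans hl1)
    have hy : y₁ ∈ G.neighborFinset ℓ₁ := (SimpleGraph.mem_neighborFinset G ℓ₁ y₁).2 h1
    rw [ha] at hy ⊢
    rw [Finset.mem_singleton.1 hy]
  have hNl2 : G.neighborFinset ℓ₂ = {y₂} := by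
    obtain ⟨a, ha⟩ := Finset.card_eq_one.1
      ((SimpleGraph.card_neighborFinset_eq_degree G ℓ₂).trans hl2)
    have hy : y₂ ∈ G.neighborFinset ℓ₂ := (SimpleGraph.mem_neighborFinset G ℓ₂ y₂).2 h2
    rw [ha] at hy ⊢
    rw [Finset.mem_singleton.1 hy]
  have hadjl1 : ∀ a, G.Adj ℓ₁ a ↔ a = y₁ := fun a => by
    rw [← SimpleGraph.mem_neighborFinset, hNl1]; simp
  have hadjl2 : ∀ a, G.Adj ℓ₂ a ↔ a = y₂ := fun a => by
    rw [← SimpleGraph.mem_neighborFinset, hNl2]; simp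
  -- distinctness facts
  have hlx1 : ℓ₁ ≠ x := by
    intro hea
    have hady : G.Adj ℓ₁ y₂ := by rw [hea]; exact hx2.symm
    have hyy : y₂ = y₁ := (hadjl1 y₂).1 hady
    have : G.Adj y₁ ℓ₂ := hyy ▸ h2.symm
    rcases (hadj1 ℓ₂).1 this with h | h
    · exact hne h.symm
    · exact hne (hea.trans h.symm)
  have hlx2 : ℓ₂ ≠ x := by
    intro hea
    have hady : G.Adj ℓ₂ y₁ := by rw [hea]; exact hx1.symm
    have hyy : y₁ = y₂ := (hadjl2 y₁).1 hady
    have : G.Adj y₂ ℓ₁ := hyy ▸ h1.symm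
    rcases (hadj2 ℓ₁).1 this with h | h
    · exact hne h
    · exact hne (h.trans hea.symm)
  have hy12 : y₁ ≠ y₂ := by
    intro h
    have : G.Adj y₁ ℓ₂ := h ▸ h2.symm
    rcases (hadj1 ℓ₂).1 this with h' | h'
    · exact hne h'.symm
    · exact hlx2 h'
  by_cases hA : ∃ u ∈ U, G.Adj u x
  · obtain ⟨u₀, hu₀U, hu₀x⟩ := hA
    have key : ∀ u ∈ U, G.Adj u x → u = u₀ := by
      intro u huU hux
      by_contra hune
      exact Set.disjoint_left.1 (hU.1 (Finset.mem_coe.2 huU) (Finset.mem_coe.2 hu₀U) hune)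
        ((SimpleGraph.mem_neighborSet G u x).2 hux)
        ((SimpleGraph.mem_neighborSet G u₀ x).2 hu₀x)
    have main : ∀ ℓ y : V, (∀ a, G.Adj y a ↔ (a = ℓ ∨ a = x)) →
        (∀ a, G.Adj ℓ a ↔ a = y) → y ≠ u₀ → False := by
      intro ℓ y hy hl hyne
      have hyU : y ∉ U := fun h => hyne (key y h ((hy x).2 (Or.inr rfl)))
      refine no_swap G U hU u₀ y hu₀U hyU ?_
      intro u huU hu0
      rw [Set.disjoint_left]
      intro a hay hau
      rw [SimpleGraph.mem_neighborSet] at hay hau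
      rcases (hy a).1 hay with rfl | rfl
      · have : u = y := (hl u).1 hau.symm
        exact hyU (this ▸ huU)
      · exact hu0 (key u huU hau)
    by_cases h0 : u₀ = y₁
    · exact main ℓ₂ y₂ hadj2 hadjl2 (by rw [h0]; exact hy12.symm)
    · exact main ℓ₁ y₁ hadj1 hadjl1 (fun h => h0 h.symm)
  · push_neg at hA
    by_cases hxU : x ∈ U
    · have hl1U : ℓ₁ ∉ U := by
        intro h
        exact Set.disjoint_left.1 (hU.1 (Finset.mem_coe.2 h) (Finset.mem_coe.2 hxU) hlx1)
          ((SimpleGraph.mem_neighborSet G ℓ₁ y₁).2 h1)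
          ((SimpleGraph.mem_neighborSet G x y₁).2 hx1.symm)
      refine no_swap G U hU x ℓ₁ hxU hl1U ?_
      intro u huU hux
      rw [Set.disjoint_left]
      intro a hal hau
      rw [SimpleGraph.mem_neighborSet] at hal hau
      have ha : a = y₁ := (hadjl1 a).1 hal
      subst ha
      rcases (hadj1 u).1 hau.symm with rfl | rfl
      · exact hl1U huU
      · exact hux rfl
    · have hl1U : ℓ₁ ∈ U := by
        by_contra h
        have hd : ∀ u ∈ U, u ≠ ℓ₁ → Disjoint (G.neighborSet ℓ₁) (G.neighborSet u) := by
          intro u huU _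
          rw [Set.disjoint_left]
          intro a hal hau
          rw [SimpleGraph.mem_neighborSet] at hal hau
          have ha : a = y₁ := (hadjl1 a).1 hal
          subst ha
          rcases (hadj1 u).1 hau.symm with rfl | rfl
          · exact h huU
          · exact hxU huU
        have hpack := swap_packing G U hU.1 ℓ₁ ℓ₁ h hd
        rw [Finset.erase_eq_of_notMem h] at hpack
        have hle := card_le_opn G _ hpack
        rw [Finset.card_insert_of_notMem h, ← hU.2.1] at hle
        omega
      have hy1U : y₁ ∉ U := fun h => hA y₁ h hx1
      refine no_swap G U hU ℓ₁ y₁ hl1U hy1U ?_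
      intro u huU hune
      rw [Set.disjoint_left]
      intro a hay hau
      rw [SimpleGraph.mem_neighborSet] at hay hau
      rcases (hadj1 a).1 hay with rfl | rfl
      · have : u = y₁ := (hadjl1 u).1 hau.symm
        exact hy1U (this ▸ huU)
      · exact hA u huU hau
end

section
/- Let G have a unique maximum open packing U, with x ∈ U, some neighbor of x in U, and suppose there is exactly one open packing of G of size ρ°(G) − 1 not containing x. Let G' be obtained from G by appending two disjoint paths P₃ to x. Then G' has a unique maximum open packing and ρ°(G') = ρ°(G) + 3. -/
variable {V : Type*}

/-- The graph obtained from `G` by appending two disjoint paths on 3 new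
vertices each to the vertex `x`. -/
def appendTwoP3 (G : SimpleGraph V) (x : V) : SimpleGraph (V ⊕ (Fin 3 ⊕ Fin 3)) :=
  SimpleGraph.fromRel fun a b => match a, b with
    | Sum.inl u, Sum.inl v => G.Adj u v
    | Sum.inl u, Sum.inr (Sum.inl i) => u = x ∧ (i : ℕ) = 0
    | Sum.inl u, Sum.inr (Sum.inr i) => u = x ∧ (i : ℕ) = 0
    | Sum.inr (Sum.inl i), Sum.inr (Sum.inl j) => (j : ℕ) = (i : ℕ) + 1
    | Sum.inr (Sum.inr i), Sum.inr (Sum.inr j) => (j : ℕ) = (i : ℕ) + 1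
    | _, _ => False

/-!
Write `a - b - c` for an appended path. An open packing `S` of `G'` restricts to an open packing
of `G` and meets each path in at most two vertices (`a` and `c` share the neighbour `b`). If
`x ∈ S`, then `b ∉ S` (shared neighbour `a`), so `|S| ≤ ρ° + 2`. If `x ∉ S`, the restriction is
not `U`, so it has at most `ρ° - 1` vertices and `|S| ≤ ρ° + 3`, with equality only if the
restriction is the unique `(ρ° - 1)`-packing avoiding `x`, namely `U \ {x}`. That contains the
neighbour `y` of `x`, which shares `x` with each `a`, so `S` is forced to be `U \ {x}` together
with `b, c` of both paths; and this set is an open packing.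
-/

open Finset Function Sum

section OpenPacking

variable {W : Type*}

lemma isOpenPacking_iff {G : SimpleGraph V} {S : Set V} :
    IsOpenPacking G S ↔
      ∀ ⦃u⦄, u ∈ S → ∀ ⦃v⦄, v ∈ S → ∀ ⦃w⦄, G.Adj w u → G.Adj w v → u = v := by
  simp only [IsOpenPacking, Set.Pairwise, Set.disjoint_left, SimpleGraph.mem_neighborSet]
  refine forall₄_congr fun u _ v _ => ?_
  constructor
  · intro h w hwu hwv
    by_contra hne
    exact h hne hwu.symm hwv.symm
  · intro h hne w hwu hwv
    exact hne (h hwu.symm hwv.symm)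

lemma IsOpenPacking.eq_of_adj {G : SimpleGraph V} {S : Set V} (hS : IsOpenPacking G S)
    {u v w : V} (hu : u ∈ S) (hv : v ∈ S) (hwu : G.Adj w u) (hwv : G.Adj w v) : u = v :=
  isOpenPacking_iff.mp hS hu hv hwu hwv

lemma IsOpenPacking.preimage {G : SimpleGraph V} {H : SimpleGraph W} (f : G →g H)
    (hf : Injective f) {S : Set W} (hS : IsOpenPacking H S) : IsOpenPacking G (f ⁻¹' S) :=
  isOpenPacking_iff.mpr fun _ hu _ hv _ hwu hwv =>
    hf (hS.eq_of_adj hu hv (f.map_adj hwu) (f.map_adj hwv))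

end OpenPacking

section OpenPackingNumber

variable [Fintype V] {G : SimpleGraph V}

lemma le_openPackingNumber {S : Finset V} (hS : IsOpenPacking G S) :
    #S ≤ openPackingNumber G :=
  le_csSup ⟨Fintype.card V, by rintro _ ⟨T, -, rfl⟩; exact T.card_le_univ⟩ ⟨S, hS, rfl⟩

lemma openPackingNumber_eq_card {S : Finset V} (hS : IsOpenPacking G S)
    (hmax : ∀ T : Finset V, IsOpenPacking G T → #T ≤ #S) : openPackingNumber G = #S :=
  le_antisymm (csSup_le ⟨_, S, hS, rfl⟩ (by rintro _ ⟨T, hT, rfl⟩; exact hmax T hT))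
    (le_openPackingNumber hS)

lemma HasUniqueMaxOpenPacking.card_lt {U S : Finset V} (hU : HasUniqueMaxOpenPacking G U)
    (hS : IsOpenPacking G S) (hne : S ≠ U) : #S < openPackingNumber G :=
  (le_openPackingNumber hS).lt_of_ne fun h => hne (hU.2.2 S hS h)

end OpenPackingNumber

/-- `x - p 0 - p 1 - p 2` is a path; no degree condition is imposed on its vertices. -/
structure IsPendantP3 {W : Type*} (H : SimpleGraph W) (x : W) (p : Fin 3 → W) : Prop where
  adj_root : H.Adj (p 0) x
  adj_01 : H.Adj (p 0) (p 1)
  adj_12 : H.Adj (p 1) (p 2)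
  ne_02 : p 0 ≠ p 2
  ne_root : x ≠ p 1

lemma card_fin_three_le_two {R : Finset (Fin 3)} (h : 0 ∈ R → 2 ∉ R) :
    #R ≤ 2 := by
  revert R; decide

lemma card_fin_three_le_one {R : Finset (Fin 3)} (h1 : 1 ∉ R) (h : 0 ∈ R → 2 ∉ R) :
    #R ≤ 1 := by
  revert R; decide

lemma eq_one_two_of_card_fin_three_eq_two {R : Finset (Fin 3)} (h0 : 0 ∉ R) (h : #R = 2) :
    R = {1, 2} := by
  revert R; decide

namespace IsPendantP3

variable {W : Type*} {H : SimpleGraph W} {x : W} {p : Fin 3 → W} {S : Finset W}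

lemma two_notMem (hp : IsPendantP3 H x p) (hS : IsOpenPacking H S) (h0 : p 0 ∈ S) :
    p 2 ∉ S :=
  fun h2 => hp.ne_02 (hS.eq_of_adj h0 h2 hp.adj_01.symm hp.adj_12)

variable [DecidableEq W]

lemma card_le_two (hp : IsPendantP3 H x p) (hS : IsOpenPacking H S) :
    #{i | p i ∈ S} ≤ 2 :=
  card_fin_three_le_two (by simpa using hp.two_notMem hS)

lemma card_le_one (hp : IsPendantP3 H x p) (hS : IsOpenPacking H S) (hx : x ∈ S) :
    #{i | p i ∈ S} ≤ 1 := by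
  refine card_fin_three_le_one ?_ (by simpa using hp.two_notMem hS)
  simpa using fun h1 => hp.ne_root (hS.eq_of_adj hx h1 hp.adj_root hp.adj_01)

lemma eq_one_two (hp : IsPendantP3 H x p) (hS : IsOpenPacking H S) {y : W} (hy : y ∈ S)
    (hxy : H.Adj x y) (hy0 : y ≠ p 0) (hcard : #{i | p i ∈ S} = 2) :
    ({i | p i ∈ S} : Finset (Fin 3)) = {1, 2} := by
  refine eq_one_two_of_card_fin_three_eq_two ?_ hcard
  simpa using fun h0 => hy0 (hS.eq_of_adj hy h0 hxy hp.adj_root.symm)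

end IsPendantP3

namespace appendTwoP3

variable {G : SimpleGraph V} {x : V}

@[simp]
lemma adj_inl_inl {u v : V} : (appendTwoP3 G x).Adj (inl u) (inl v) ↔ G.Adj u v := by
  simp only [appendTwoP3, SimpleGraph.fromRel_adj, ne_eq, inl.injEq]
  exact ⟨fun ⟨_, h⟩ => h.elim id SimpleGraph.Adj.symm, fun h => ⟨h.ne, .inl h⟩⟩

@[simp]
lemma adj_inl_inr {u : V} {a : Fin 3 ⊕ Fin 3} :
    (appendTwoP3 G x).Adj (inl u) (inr a) ↔ u = x ∧ (a = inl 0 ∨ a = inr 0) := by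
  rcases a with i | i <;> simp [appendTwoP3]

@[simp]
lemma adj_inr_inl {u : V} {a : Fin 3 ⊕ Fin 3} :
    (appendTwoP3 G x).Adj (inr a) (inl u) ↔ u = x ∧ (a = inl 0 ∨ a = inr 0) :=
  SimpleGraph.adj_comm _ _ _ |>.trans adj_inl_inr

@[simp]
lemma adj_inr_inr_inl_inl {i j : Fin 3} :
    (appendTwoP3 G x).Adj (inr (inl i)) (inr (inl j)) ↔ (j : ℕ) = i + 1 ∨ (i : ℕ) = j + 1 := by
  simp only [appendTwoP3, SimpleGraph.fromRel_adj, ne_eq, inr.injEq, inl.injEq]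
  exact ⟨And.right, fun h => ⟨by rintro rfl; omega, h⟩⟩

@[simp]
lemma adj_inr_inr_inr_inr {i j : Fin 3} :
    (appendTwoP3 G x).Adj (inr (inr i)) (inr (inr j)) ↔ (j : ℕ) = i + 1 ∨ (i : ℕ) = j + 1 := by
  simp only [appendTwoP3, SimpleGraph.fromRel_adj, ne_eq, inr.injEq]
  exact ⟨And.right, fun h => ⟨by rintro rfl; omega, h⟩⟩

@[simp]
lemma not_adj_inr_inl_inr_inr {i j : Fin 3} :
    ¬ (appendTwoP3 G x).Adj (inr (inl i)) (inr (inr j)) := by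
  simp [appendTwoP3]

@[simp]
lemma not_adj_inr_inr_inr_inl {i j : Fin 3} :
    ¬ (appendTwoP3 G x).Adj (inr (inr i)) (inr (inl j)) := by
  simp [appendTwoP3]

lemma isPendantP3_left : IsPendantP3 (appendTwoP3 G x) (inl x) (inr ∘ inl) := by
  constructor <;> simp

lemma isPendantP3_right : IsPendantP3 (appendTwoP3 G x) (inl x) (inr ∘ inr) := by
  constructor <;> simp

def lastTwo : Finset (Fin 3 ⊕ Fin 3) := ({1, 2} : Finset (Fin 3)).disjSum {1, 2}

lemma card_lastTwo : #lastTwo = 4 := rfl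

lemma isOpenPacking_disjSum_lastTwo [DecidableEq V] {T : Finset V} (hT : IsOpenPacking G T)
    (hx : x ∉ T) :
    IsOpenPacking (appendTwoP3 G x) ↑(T.disjSum lastTwo) := by
  rw [isOpenPacking_iff]
  rintro (u | u | u) hu (v | v | v) hv (w | w | w) hwu hwv <;>
    simp only [lastTwo, SetLike.mem_coe, inl_mem_disjSum, inr_mem_disjSum, mem_insert,
      mem_singleton, adj_inl_inl, adj_inl_inr, adj_inr_inl, adj_inr_inr_inl_inl,
      adj_inr_inr_inr_inr, not_adj_inr_inl_inr_inr, not_adj_inr_inr_inr_inl, inl.injEq, inr.injEq,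
      reduceCtorEq, Fin.isValue, false_or, or_false] at hu hv hwu hwv ⊢
  -- common neighbours through `x` are ruled out by `x ∉ T`; the rest is arithmetic in `Fin 3`
  all_goals first | exact hT.eq_of_adj hu hv hwu hwv | grind

variable {S : Finset (V ⊕ (Fin 3 ⊕ Fin 3))}

lemma isOpenPacking_toLeft (hS : IsOpenPacking (appendTwoP3 G x) S) :
    IsOpenPacking G S.toLeft := by
  rw [show (S.toLeft : Set V) = inl ⁻¹' (S : Set (V ⊕ (Fin 3 ⊕ Fin 3))) by ext; simp]
  exact hS.preimage ⟨inl, adj_inl_inl.mpr⟩ inl_injective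

lemma card_toLeft_lt_of_inl_notMem [Fintype V] {U : Finset V}
    (hU : HasUniqueMaxOpenPacking G U) (hx : x ∈ U) (hS : IsOpenPacking (appendTwoP3 G x) S)
    (hxS : inl x ∉ S) :
    #S.toLeft < openPackingNumber G :=
  hU.card_lt (isOpenPacking_toLeft hS) fun h => hxS (mem_toLeft.mp (h ▸ hx))

variable [DecidableEq V]

lemma eq_toLeft_disjSum_legs (S : Finset (V ⊕ (Fin 3 ⊕ Fin 3))) :
    S = S.toLeft.disjSum
      (({i | (inr ∘ inl) i ∈ S} : Finset (Fin 3)).disjSum {i | (inr ∘ inr) i ∈ S}) := by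
  ext (v | i | i) <;> simp

lemma card_eq_card_toLeft_add_legs (S : Finset (V ⊕ (Fin 3 ⊕ Fin 3))) :
    #S = #S.toLeft + #{i | (inr ∘ inl) i ∈ S} + #{i | (inr ∘ inr) i ∈ S} := by
  conv_lhs => rw [eq_toLeft_disjSum_legs S]
  rw [card_disjSum, card_disjSum, add_assoc]

variable [Fintype V]

lemma card_le_of_inl_mem (hS : IsOpenPacking (appendTwoP3 G x) S) (hxS : inl x ∈ S) :
    #S ≤ openPackingNumber G + 2 := by
  have hT := le_openPackingNumber (isOpenPacking_toLeft hS)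
  have h₁ := isPendantP3_left.card_le_one hS hxS
  have h₂ := isPendantP3_right.card_le_one hS hxS
  rw [card_eq_card_toLeft_add_legs S]
  omega

lemma card_le {U : Finset V} (hU : HasUniqueMaxOpenPacking G U) (hx : x ∈ U)
    (hS : IsOpenPacking (appendTwoP3 G x) S) : #S ≤ openPackingNumber G + 3 := by
  by_cases hxS : inl x ∈ S
  · exact (card_le_of_inl_mem hS hxS).trans (by omega)
  have hT := card_toLeft_lt_of_inl_notMem hU hx hS hxS
  have h₁ := isPendantP3_left.card_le_two hS
  have h₂ := isPendantP3_right.card_le_two hS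
  rw [card_eq_card_toLeft_add_legs S]
  omega

lemma eq_of_card_eq {U : Finset V} (hU : HasUniqueMaxOpenPacking G U) (hx : x ∈ U)
    {y : V} (hy : y ∈ U) (hxy : G.Adj x y)
    (huniq : ∃! T : Finset V, IsOpenPacking G ↑T ∧ #T = openPackingNumber G - 1 ∧ x ∉ T)
    (hS : IsOpenPacking (appendTwoP3 G x) S) (hcard : #S = openPackingNumber G + 3) :
    S = (U.erase x).disjSum lastTwo := by
  have hxS : inl x ∉ S := fun hxS => by have := card_le_of_inl_mem hS hxS; omega
  have hT := card_toLeft_lt_of_inl_notMem hU hx hS hxS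
  have h₁ := isPendantP3_left.card_le_two hS
  have h₂ := isPendantP3_right.card_le_two hS
  rw [card_eq_card_toLeft_add_legs S] at hcard
  have hToLeft : S.toLeft = U.erase x := by
    refine huniq.unique ⟨isOpenPacking_toLeft hS, by omega, fun h => hxS (mem_toLeft.mp h)⟩
      ⟨hU.1.mono (by simp), ?_, notMem_erase x U⟩
    rw [card_erase_of_mem hx, hU.2.1]
  have hyS : inl y ∈ S := mem_toLeft.mp (hToLeft ▸ mem_erase.mpr ⟨hxy.ne.symm, hy⟩)
  rw [eq_toLeft_disjSum_legs S, hToLeft,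
    isPendantP3_left.eq_one_two hS hyS (adj_inl_inl.mpr hxy) (by simp) (by omega),
    isPendantP3_right.eq_one_two hS hyS (adj_inl_inl.mpr hxy) (by simp) (by omega)]
  rfl

end appendTwoP3

theorem stmt_6_general [Fintype V] (G : SimpleGraph V)
    (U : Finset V) (hU : HasUniqueMaxOpenPacking G U)
    (x y : V) (hx : x ∈ U) (hy : y ∈ U) (hxy : G.Adj x y)
    (huniq : ∃! S : Finset V,
      IsOpenPacking G ↑S ∧ S.card = openPackingNumber G - 1 ∧ x ∉ S) :
    (∃ U' : Finset (V ⊕ (Fin 3 ⊕ Fin 3)),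
      HasUniqueMaxOpenPacking (appendTwoP3 G x) U') ∧
    openPackingNumber (appendTwoP3 G x) = openPackingNumber G + 3 := by
  classical
  set U' := (U.erase x).disjSum appendTwoP3.lastTwo
  have hU'_packing : IsOpenPacking (appendTwoP3 G x) U' :=
    appendTwoP3.isOpenPacking_disjSum_lastTwo (hU.1.mono (by simp)) (notMem_erase x U)
  have hU'_card : #U' = openPackingNumber G + 3 := by
    have : 0 < #U := card_pos.mpr ⟨x, hx⟩
    rw [card_disjSum, card_erase_of_mem hx, appendTwoP3.card_lastTwo, ← hU.2.1]
    omega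
  have hρ : openPackingNumber (appendTwoP3 G x) = openPackingNumber G + 3 := by
    rw [openPackingNumber_eq_card hU'_packing fun S hS => hU'_card ▸ appendTwoP3.card_le hU hx hS,
      hU'_card]
  exact ⟨⟨U', hU'_packing, hρ ▸ hU'_card, fun S hS hcard =>
    appendTwoP3.eq_of_card_eq hU hx hy hxy huniq hS (hcard.trans hρ)⟩, hρ⟩

theorem stmt_6 [Fintype V] [DecidableEq V] (G : SimpleGraph V)
    (U : Finset V) (hU : HasUniqueMaxOpenPacking G U)
    (x y : V) (hx : x ∈ U) (hy : y ∈ U) (hxy : G.Adj x y)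
    (huniq : ∃! S : Finset V,
      IsOpenPacking G ↑S ∧ S.card = openPackingNumber G - 1 ∧ x ∉ S) :
    (∃ U' : Finset (V ⊕ (Fin 3 ⊕ Fin 3)),
      HasUniqueMaxOpenPacking (appendTwoP3 G x) U') ∧
    openPackingNumber (appendTwoP3 G x) = openPackingNumber G + 3 :=
  stmt_6_general G U hU x y hx hy hxy huniq
end

section
/- The path Pₙ on n ≥ 2 vertices has a unique maximum open packing if and only if n ≡ 2 (mod 4). -/
variable {V : Type*}

lemma isOpenPacking_path_iff {n : ℕ} (S : Finset (Fin n)) :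
    IsOpenPacking (SimpleGraph.pathGraph n) ↑S ↔
      ∀ u ∈ S, ∀ v ∈ S, (v : ℕ) ≠ (u : ℕ) + 2 := by
  constructor
  · intro h u hu v hv hval
    have huv : u ≠ v := by
      intro e; subst e; omega
    have hd := h (Finset.mem_coe.mpr hu) (Finset.mem_coe.mpr hv) huv
    have hlt : (u : ℕ) + 1 < n := by have := v.isLt; omega
    have hm1 : (⟨(u : ℕ) + 1, hlt⟩ : Fin n) ∈ (SimpleGraph.pathGraph n).neighborSet u := by
      simp [SimpleGraph.mem_neighborSet, SimpleGraph.pathGraph_adj]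
    have hm2 : (⟨(u : ℕ) + 1, hlt⟩ : Fin n) ∈ (SimpleGraph.pathGraph n).neighborSet v := by
      simp [SimpleGraph.mem_neighborSet, SimpleGraph.pathGraph_adj]
      omega
    exact Set.disjoint_left.mp hd hm1 hm2
  · intro h u hu v hv hne
    rw [Set.disjoint_left]
    intro w hw1 hw2
    simp only [SimpleGraph.mem_neighborSet, SimpleGraph.pathGraph_adj] at hw1 hw2
    have h1 := h u (Finset.mem_coe.mp hu) v (Finset.mem_coe.mp hv)
    have h2 := h v (Finset.mem_coe.mp hv) u (Finset.mem_coe.mp hu)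
    have : (u : ℕ) ≠ (v : ℕ) := fun e => hne (Fin.ext e)
    omega

/-- The canonical maximum open packing: vertices whose index is 0 or 1 mod 4. -/
def pathU (n : ℕ) : Finset (Fin n) :=
  Finset.univ.filter (fun i => (i : ℕ) % 4 = 0 ∨ (i : ℕ) % 4 = 1)

lemma natCount (n : ℕ) :
    ((Finset.range n).filter (fun i => i % 4 = 0 ∨ i % 4 = 1)).card
      = 2 * (n / 4) + min (n % 4) 2 := by
  induction n with
  | zero => simp
  | succ m ih =>
    rw [Finset.range_add_one, Finset.filter_insert]
    by_cases hm : m % 4 = 0 ∨ m % 4 = 1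
    · rw [if_pos hm, Finset.card_insert_of_notMem (by simp)]
      omega
    · rw [if_neg hm]; omega

lemma pathU_card (n : ℕ) : (pathU n).card = 2 * (n / 4) + min (n % 4) 2 := by
  rw [← natCount n, ← Finset.card_image_of_injective (pathU n) Fin.val_injective]
  congr 1
  ext j
  simp only [Finset.mem_image, Finset.mem_filter, Finset.mem_range, pathU,
    Finset.mem_univ, true_and]
  constructor
  · rintro ⟨i, hi, rfl⟩; exact ⟨i.isLt, hi⟩
  · rintro ⟨hj, hp⟩; exact ⟨⟨j, hj⟩, hp, rfl⟩

lemma pathU_packing (n : ℕ) : ∀ u ∈ pathU n, ∀ v ∈ pathU n, (v : ℕ) ≠ (u : ℕ) + 2 := by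
  intro u hu v hv
  simp only [pathU, Finset.mem_filter, Finset.mem_univ, true_and] at hu hv
  omega

lemma fiber_le_two {n : ℕ} (S : Finset (Fin n))
    (h : ∀ u ∈ S, ∀ v ∈ S, (v : ℕ) ≠ (u : ℕ) + 2) (w : ℕ) :
    (S.filter (fun i : Fin n => (i : ℕ) / 4 = w)).card ≤ 2 := by
  by_contra hcc
  push_neg at hcc
  obtain ⟨a, b, c, ha, hb, hc, hab, hac, hbc⟩ := Finset.two_lt_card_iff.mp hcc
  simp only [Finset.mem_filter] at ha hb hc
  have h1 := h a ha.1 b hb.1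
  have h2 := h b hb.1 a ha.1
  have h3 := h a ha.1 c hc.1
  have h4 := h c hc.1 a ha.1
  have h5 := h b hb.1 c hc.1
  have h6 := h c hc.1 b hb.1
  have e1 : (a : ℕ) ≠ b := fun e => hab (Fin.ext e)
  have e2 : (a : ℕ) ≠ c := fun e => hac (Fin.ext e)
  have e3 : (b : ℕ) ≠ c := fun e => hbc (Fin.ext e)
  have := ha.2; have := hb.2; have := hc.2
  omega

lemma card_eq_sum_fibers {n : ℕ} (S : Finset (Fin n)) :
    S.card = ∑ w ∈ Finset.range (n / 4 + 1),
      (S.filter (fun i : Fin n => (i : ℕ) / 4 = w)).card :=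
  Finset.card_eq_sum_card_fiberwise
    (fun x _ => Finset.mem_range.mpr (by have := x.isLt; omega))

lemma packing_card_le {n : ℕ} (S : Finset (Fin n))
    (h : ∀ u ∈ S, ∀ v ∈ S, (v : ℕ) ≠ (u : ℕ) + 2) :
    S.card ≤ 2 * (n / 4) + min (n % 4) 2 := by
  have hlast : (S.filter (fun i : Fin n => (i : ℕ) / 4 = n / 4)).card ≤ n % 4 := by
    have hsub : (S.filter (fun i : Fin n => (i : ℕ) / 4 = n / 4)).image Fin.val
        ⊆ Finset.Ico (4 * (n / 4)) n := by
      intro j hj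
      simp only [Finset.mem_image, Finset.mem_filter] at hj
      obtain ⟨i, ⟨_, hi2⟩, rfl⟩ := hj
      simp only [Finset.mem_Ico]
      have := i.isLt
      omega
    have := Finset.card_le_card hsub
    rw [Finset.card_image_of_injective _ Fin.val_injective, Nat.card_Ico] at this
    omega
  rw [card_eq_sum_fibers S, Finset.sum_range_succ]
  have hsum : ∑ w ∈ Finset.range (n / 4), (S.filter (fun i : Fin n => (i : ℕ) / 4 = w)).card
      ≤ 2 * (n / 4) := by
    calc ∑ w ∈ Finset.range (n / 4), (S.filter (fun i : Fin n => (i : ℕ) / 4 = w)).card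
        ≤ ∑ _w ∈ Finset.range (n / 4), 2 := Finset.sum_le_sum (fun w _ => fiber_le_two S h w)
      _ = 2 * (n / 4) := by rw [Finset.sum_const, Finset.card_range]; ring
  have := fiber_le_two S h (n / 4)
  omega

lemma openPackingNumber_path (n : ℕ) :
    openPackingNumber (SimpleGraph.pathGraph n) = 2 * (n / 4) + min (n % 4) 2 := by
  have hbd : ∀ m ∈ {m | ∃ S : Finset (Fin n),
      IsOpenPacking (SimpleGraph.pathGraph n) ↑S ∧ S.card = m},
      m ≤ 2 * (n / 4) + min (n % 4) 2 := by
    rintro m ⟨S, hS, rfl⟩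
    exact packing_card_le S ((isOpenPacking_path_iff S).mp hS)
  apply le_antisymm
  · exact csSup_le ⟨(pathU n).card, pathU n,
      (isOpenPacking_path_iff _).mpr (pathU_packing n), rfl⟩ hbd
  · exact le_csSup ⟨_, hbd⟩ ⟨pathU n,
      (isOpenPacking_path_iff _).mpr (pathU_packing n), pathU_card n⟩

theorem stmt_8 (n : ℕ) (hn : 2 ≤ n) :
    (∃ U : Finset (Fin n),
      HasUniqueMaxOpenPacking (SimpleGraph.pathGraph n) U) ↔ n % 4 = 2 := by
  constructor
  · rintro ⟨U, _, _, hU3⟩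
    by_contra hmod
    have hmax : (pathU n).card = openPackingNumber (SimpleGraph.pathGraph n) := by
      rw [openPackingNumber_path, pathU_card]
    set T : Finset (Fin n) := (pathU n).image Fin.rev with hTdef
    have hTcard : T.card = (pathU n).card :=
      Finset.card_image_of_injective _ Fin.rev_injective
    have hTpack : ∀ u ∈ T, ∀ v ∈ T, (v : ℕ) ≠ (u : ℕ) + 2 := by
      intro u hu v hv
      simp only [hTdef, Finset.mem_image] at hu hv
      obtain ⟨a, ha, rfl⟩ := hu
      obtain ⟨b, hb, rfl⟩ := hv
      have h1 := pathU_packing n a ha b hb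
      have h2 := pathU_packing n b hb a ha
      have := a.isLt; have := b.isLt
      simp only [Fin.val_rev]
      omega
    have e1 := hU3 (pathU n) ((isOpenPacking_path_iff _).mpr (pathU_packing n)) hmax
    have e2 := hU3 T ((isOpenPacking_path_iff _).mpr hTpack) (hTcard.trans hmax)
    have e : pathU n = T := e1.trans e2.symm
    -- derive a contradiction using a witness element
    set xv : ℕ := if n % 4 = 1 then 1 else 0 with hxv
    have hxv2 : (n % 4 = 1 ∧ xv = 1) ∨ (n % 4 ≠ 1 ∧ xv = 0) := by
      by_cases h : n % 4 = 1 <;> simp [hxv, h]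
    have hxlt : xv < n := by omega
    have hxU : (⟨xv, hxlt⟩ : Fin n) ∈ pathU n := by
      simp only [pathU, Finset.mem_filter, Finset.mem_univ, true_and]
      omega
    rw [e, hTdef] at hxU
    obtain ⟨a, ha, hrev⟩ := Finset.mem_image.mp hxU
    simp only [pathU, Finset.mem_filter, Finset.mem_univ, true_and] at ha
    have hv : n - ((a : ℕ) + 1) = xv := by
      simpa [Fin.val_rev] using congrArg Fin.val hrev
    have := a.isLt
    omega
  · intro hmod
    refine ⟨pathU n, (isOpenPacking_path_iff _).mpr (pathU_packing n),
      by rw [openPackingNumber_path, pathU_card], ?_⟩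
    intro S hSp hScard
    have hp := (isOpenPacking_path_iff S).mp hSp
    rw [openPackingNumber_path] at hScard
    have hn2 : n = 4 * (n / 4) + 2 := by omega
    have hScard' : S.card = 2 * (n / 4) + 2 := by omega
    -- every fiber has exactly two elements
    have hall : ∀ w ∈ Finset.range (n / 4 + 1),
        (S.filter (fun i : Fin n => (i : ℕ) / 4 = w)).card = 2 := by
      intro w hw
      have h2 := fiber_le_two S hp w
      have hsplit : (S.filter (fun i : Fin n => (i : ℕ) / 4 = w)).card
          + ∑ x ∈ (Finset.range (n / 4 + 1)).erase w,
            (S.filter (fun i : Fin n => (i : ℕ) / 4 = x)).card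
          = ∑ x ∈ Finset.range (n / 4 + 1),
            (S.filter (fun i : Fin n => (i : ℕ) / 4 = x)).card :=
        Finset.add_sum_erase _ (fun x => (S.filter (fun i : Fin n => (i : ℕ) / 4 = x)).card) hw
      have hbound : ∑ x ∈ (Finset.range (n / 4 + 1)).erase w,
          (S.filter (fun i : Fin n => (i : ℕ) / 4 = x)).card
          ≤ ((n / 4 + 1) - 1) * 2 := by
        have h3 := Finset.sum_le_card_nsmul ((Finset.range (n / 4 + 1)).erase w)
          (fun x => (S.filter (fun i : Fin n => (i : ℕ) / 4 = x)).card) 2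
          (fun x _ => fiber_le_two S hp x)
        rwa [Finset.card_erase_of_mem hw, Finset.card_range, smul_eq_mul] at h3
      have hsum := card_eq_sum_fibers S
      omega
    -- M j: j is the value of some element of S
    have step : ∀ w, w ≤ n / 4 →
        (w = n / 4 ∨ ((∃ i ∈ S, (i : ℕ) = 4 * w + 4) ∧ (∃ i ∈ S, (i : ℕ) = 4 * w + 5))) →
        ((∃ i ∈ S, (i : ℕ) = 4 * w) ∧ (∃ i ∈ S, (i : ℕ) = 4 * w + 1)) := by
      intro w hw hprev
      have h2 := hall w (Finset.mem_range.mpr (by omega))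
      obtain ⟨a, b, ha, hb, hab⟩ := Finset.one_lt_card_iff.mp
        (show 1 < (S.filter (fun i : Fin n => (i : ℕ) / 4 = w)).card by omega)
      simp only [Finset.mem_filter] at ha hb
      have hne : (a : ℕ) ≠ b := fun e => hab (Fin.ext e)
      have halt := a.isLt; have hblt := b.isLt
      have hax2 : (a : ℕ) ≠ 4 * w + 2 ∧ (b : ℕ) ≠ 4 * w + 2 := by
        rcases hprev with rfl | ⟨⟨p, hpS, hpv⟩, _⟩
        · omega
        · exact ⟨fun e => hp a ha.1 p hpS (by omega),
            fun e => hp b hb.1 p hpS (by omega)⟩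
      have hax3 : (a : ℕ) ≠ 4 * w + 3 ∧ (b : ℕ) ≠ 4 * w + 3 := by
        rcases hprev with rfl | ⟨_, ⟨q, hqS, hqv⟩⟩
        · omega
        · exact ⟨fun e => hp a ha.1 q hqS (by omega),
            fun e => hp b hb.1 q hqS (by omega)⟩
      have hcase : (a : ℕ) = 4 * w ∧ (b : ℕ) = 4 * w + 1 ∨
          (a : ℕ) = 4 * w + 1 ∧ (b : ℕ) = 4 * w := by omega
      rcases hcase with ⟨e1, e2⟩ | ⟨e1, e2⟩
      · exact ⟨⟨a, ha.1, e1⟩, ⟨b, hb.1, e2⟩⟩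
      · exact ⟨⟨b, hb.1, e2⟩, ⟨a, ha.1, e1⟩⟩
    have chain : ∀ d, d ≤ n / 4 →
        ((∃ i ∈ S, (i : ℕ) = 4 * (n / 4 - d)) ∧ (∃ i ∈ S, (i : ℕ) = 4 * (n / 4 - d) + 1)) := by
      intro d
      induction d with
      | zero => intro _; exact step (n / 4) le_rfl (Or.inl (by omega))
      | succ m ih =>
        intro hd
        have h1 := ih (by omega)
        refine step _ (by omega) (Or.inr ?_)
        have e4 : 4 * (n / 4 - (m + 1)) + 4 = 4 * (n / 4 - m) := by omega
        have e5 : 4 * (n / 4 - (m + 1)) + 5 = 4 * (n / 4 - m) + 1 := by omega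
        rw [e4, e5]
        exact h1
    have hsub : pathU n ⊆ S := by
      intro i hi
      simp only [pathU, Finset.mem_filter, Finset.mem_univ, true_and] at hi
      have hilt := i.isLt
      have hwle : (i : ℕ) / 4 ≤ n / 4 := by omega
      have hc := chain (n / 4 - (i : ℕ) / 4) (by omega)
      have hww : n / 4 - (n / 4 - (i : ℕ) / 4) = (i : ℕ) / 4 := by omega
      rw [hww] at hc
      rcases hi with h0 | h1
      · obtain ⟨j, hjS, hjv⟩ := hc.1
        have : j = i := Fin.ext (by omega)
        rwa [this] at hjS
      · obtain ⟨j, hjS, hjv⟩ := hc.2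
        have : j = i := Fin.ext (by omega)
        rwa [this] at hjS
    exact (Finset.eq_of_subset_of_card_le hsub
      (by rw [hScard', pathU_card]; omega)).symm
end

section
/- The open packing number of the path Pₙ is ρ°(Pₙ) = 2⌊n/4⌋ + r, where r = 1 if n ≡ 1 (mod 4), r = 2 if n ≡ 2 or 3 (mod 4), and r = 0 if n ≡ 0 (mod 4). -/
variable {V : Type*}

lemma packing_iff_aux {n : ℕ} (S : Finset (Fin n)) :
    IsOpenPacking (SimpleGraph.pathGraph n) ↑S ↔
      ∀ u ∈ S, ∀ v ∈ S, u.val + 2 ≠ v.val := by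
  constructor
  · intro h u hu v hv heq
    have huv : u ≠ v := by
      intro he; rw [he] at heq; omega
    have hd := h (Finset.mem_coe.mpr hu) (Finset.mem_coe.mpr hv) huv
    have hwlt : u.val + 1 < n := by have := v.isLt; omega
    set w : Fin n := ⟨u.val + 1, hwlt⟩ with hw
    have h1 : w ∈ (SimpleGraph.pathGraph n).neighborSet u := by
      simp [SimpleGraph.mem_neighborSet, SimpleGraph.pathGraph_adj, hw]
    have h2 : w ∈ (SimpleGraph.pathGraph n).neighborSet v := by
      simp [SimpleGraph.mem_neighborSet, SimpleGraph.pathGraph_adj, hw]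
      omega
    exact Set.disjoint_left.mp hd h1 h2
  · intro h u hu v hv huv
    rw [Set.disjoint_left]
    intro w hwu hwv
    rw [SimpleGraph.mem_neighborSet, SimpleGraph.pathGraph_adj] at hwu hwv
    have hne : u.val ≠ v.val := fun he => huv (Fin.ext he)
    have h1 := h u (Finset.mem_coe.mp hu) v (Finset.mem_coe.mp hv)
    have h2 := h v (Finset.mem_coe.mp hv) u (Finset.mem_coe.mp hu)
    omega

lemma noTwo_card_le : ∀ (n : ℕ) (T : Finset ℕ), (∀ x ∈ T, x < n) →
    (∀ x ∈ T, x + 2 ∉ T) → T.card ≤ 2 * (n / 4) + min (n % 4) 2 := by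
  intro n
  induction n using Nat.strong_induction_on with
  | _ n ih =>
    intro T hTn hT2
    rcases lt_or_ge n 4 with hn | hn
    · have hsub : T ⊆ Finset.range n := fun x hx => Finset.mem_range.mpr (hTn x hx)
      have hcard : T.card ≤ n := by
        calc T.card ≤ (Finset.range n).card := Finset.card_le_card hsub
        _ = n := Finset.card_range n
      interval_cases n
      · simpa using hcard
      · omega
      · omega
      · -- n = 3 : need card ≤ 2
        have : T.card ≤ 2 := by
          by_contra hc
          push_neg at hc
          have h3 : (Finset.range 3).card ≤ T.card := by
            rw [Finset.card_range]; omega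
          have hEq : T = Finset.range 3 := Finset.eq_of_subset_of_card_le hsub h3 ▸ rfl
          have := Finset.eq_of_subset_of_card_le hsub h3
          have h0 : 0 ∈ T := this ▸ (by decide)
          have h2' : 2 ∈ T := this ▸ (by decide)
          exact hT2 0 h0 h2'
        omega
    · set m := n - 4 with hm
      have hmn : m < n := by omega
      set A := T.filter (fun x => x < m) with hA
      set B := T.filter (fun x => ¬ x < m) with hB
      have hcard : A.card + B.card = T.card := Finset.card_filter_add_card_filter_not _
      have hAle : A.card ≤ 2 * (m / 4) + min (m % 4) 2 := by
        apply ih m hmn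
        · intro x hx
          exact (Finset.mem_filter.mp hx).2
        · intro x hx hx2
          exact hT2 x (Finset.mem_filter.mp hx).1 (Finset.mem_filter.mp hx2).1
      have hBsub : B ⊆ T := Finset.filter_subset _ _
      have hBrange : ∀ x ∈ B, m ≤ x ∧ x < m + 4 := by
        intro x hx
        have h1 := (Finset.mem_filter.mp hx).2
        have h2 := hTn x (hBsub hx)
        omega
      have hBle : B.card ≤ 2 := by
        have hsub2 : B ⊆ ({m, m + 2} : Finset ℕ) ∪ {m + 1, m + 3} := by
          intro x hx
          have := hBrange x hx
          simp only [Finset.mem_union, Finset.mem_insert, Finset.mem_singleton]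
          omega
        have hc1 : (B ∩ {m, m + 2}).card ≤ 1 := by
          rw [Finset.card_le_one]
          intro a ha b hb
          simp only [Finset.mem_inter, Finset.mem_insert, Finset.mem_singleton] at ha hb
          by_contra hab
          have hmT : m ∈ T ∧ m + 2 ∈ T := by
            rcases ha.2 with h | h <;> rcases hb.2 with h' | h' <;>
              [skip; skip; skip; skip] <;>
              first
                | (exfalso; exact hab (h.trans h'.symm))
                | exact ⟨h ▸ hBsub ha.1, h' ▸ hBsub hb.1⟩
                | exact ⟨h' ▸ hBsub hb.1, h ▸ hBsub ha.1⟩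
          exact hT2 m hmT.1 hmT.2
        have hc2 : (B ∩ {m + 1, m + 3}).card ≤ 1 := by
          rw [Finset.card_le_one]
          intro a ha b hb
          simp only [Finset.mem_inter, Finset.mem_insert, Finset.mem_singleton] at ha hb
          by_contra hab
          have hmT : m + 1 ∈ T ∧ m + 3 ∈ T := by
            rcases ha.2 with h | h <;> rcases hb.2 with h' | h' <;>
              first
                | (exfalso; exact hab (h.trans h'.symm))
                | exact ⟨h ▸ hBsub ha.1, h' ▸ hBsub hb.1⟩
                | exact ⟨h' ▸ hBsub hb.1, h ▸ hBsub ha.1⟩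
          exact hT2 (m + 1) hmT.1 (by simpa using hmT.2)
        calc B.card = (B ∩ (({m, m + 2} : Finset ℕ) ∪ {m + 1, m + 3})).card := by
              rw [Finset.inter_eq_left.mpr hsub2]
          _ = ((B ∩ {m, m + 2}) ∪ (B ∩ {m + 1, m + 3})).card := by
              rw [Finset.inter_union_distrib_left]
          _ ≤ (B ∩ {m, m + 2}).card + (B ∩ {m + 1, m + 3}).card := Finset.card_union_le _ _
          _ ≤ 2 := by omega
      have harith : n = m + 4 := by omega
      omega

lemma card_filter_mod (n : ℕ) :
    ((Finset.range n).filter (fun x => x % 4 < 2)).card = 2 * (n / 4) + min (n % 4) 2 := by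
  induction n with
  | zero => simp
  | succ k ih =>
    rw [Finset.range_add_one, Finset.filter_insert]
    split_ifs with h
    · rw [Finset.card_insert_of_notMem (by simp)]
      omega
    · omega

theorem stmt_9 (n : ℕ) :
    openPackingNumber (SimpleGraph.pathGraph n) =
      2 * (n / 4) + (if n % 4 = 1 then 1 else if n % 4 = 0 then 0 else 2) := by
  set K := 2 * (n / 4) + (if n % 4 = 1 then 1 else if n % 4 = 0 then 0 else 2) with hK
  have hKmin : K = 2 * (n / 4) + min (n % 4) 2 := by
    rw [hK]; simp only [Nat.min_def]; split_ifs <;> omega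
  -- lower bound witness
  set T₀ : Finset ℕ := (Finset.range n).filter (fun x => x % 4 < 2) with hT₀
  have hT₀lt : ∀ m ∈ T₀, m < n := by
    intro m hm
    exact Finset.mem_range.mp (Finset.mem_of_mem_filter m hm)
  set S₀ : Finset (Fin n) := T₀.attachFin hT₀lt with hS₀
  have hS₀card : S₀.card = K := by
    rw [hS₀, Finset.card_attachFin, hT₀, card_filter_mod, hKmin]
  have hS₀mem : ∀ u : Fin n, u ∈ S₀ ↔ u.val % 4 < 2 := by
    intro u
    rw [hS₀, Finset.mem_attachFin, hT₀, Finset.mem_filter, Finset.mem_range]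
    exact ⟨fun h => h.2, fun h => ⟨u.isLt, h⟩⟩
  have hS₀pack : IsOpenPacking (SimpleGraph.pathGraph n) ↑S₀ := by
    rw [packing_iff_aux]
    intro u hu v hv
    have h1 := (hS₀mem u).mp hu
    have h2 := (hS₀mem v).mp hv
    omega
  -- upper bound
  have hub : ∀ k ∈ {k | ∃ S : Finset (Fin n),
      IsOpenPacking (SimpleGraph.pathGraph n) ↑S ∧ S.card = k}, k ≤ K := by
    rintro k ⟨S, hpack, rfl⟩
    rw [packing_iff_aux] at hpack
    set T := S.image Fin.val with hT
    have hTcard : T.card = S.card := Finset.card_image_of_injective _ Fin.val_injective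
    have hTle : T.card ≤ 2 * (n / 4) + min (n % 4) 2 := by
      apply noTwo_card_le n
      · intro x hx
        obtain ⟨u, _, rfl⟩ := Finset.mem_image.mp hx
        exact u.isLt
      · intro x hx hx2
        obtain ⟨u, hu, rfl⟩ := Finset.mem_image.mp hx
        obtain ⟨v, hv, hv2⟩ := Finset.mem_image.mp hx2
        exact hpack u hu v hv hv2.symm
    rw [hKmin]
    omega
  have hne : K ∈ {k | ∃ S : Finset (Fin n),
      IsOpenPacking (SimpleGraph.pathGraph n) ↑S ∧ S.card = k} := ⟨S₀, hS₀pack, hS₀card⟩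
  rw [openPackingNumber]
  apply le_antisymm
  · exact csSup_le ⟨K, hne⟩ hub
  · exact le_csSup ⟨K, hub⟩ hne
end

section
/- Let G have a unique maximum open packing U and let x be a vertex of G with a pendant path x-u₁-u₂-…-u_k attached (deg(u_i) = 2 for 1 ≤ i ≤ k−1 and u_k a leaf), with k ≥ 4. Then u_{k-1} and u_k both belong to U and u_{k-3} ∉ U. -/
variable {V : Type*}

lemma adj_iff_of_degree_two [Fintype V] (G : SimpleGraph V) [DecidableRel G.Adj]
    {v p q : V} (hpq : p ≠ q) (hp : G.Adj v p) (hq : G.Adj v q)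
    (h2 : G.degree v = 2) : ∀ w, G.Adj v w ↔ w = p ∨ w = q := by
  classical
  have hsub : ({p, q} : Finset V) ⊆ G.neighborFinset v := by
    intro w hw
    simp only [Finset.mem_insert, Finset.mem_singleton] at hw
    rcases hw with rfl | rfl <;> simp [SimpleGraph.mem_neighborFinset, hp, hq]
  have hcard : (G.neighborFinset v).card ≤ ({p, q} : Finset V).card := by
    rw [Finset.card_insert_of_notMem (by simpa using hpq), Finset.card_singleton]
    have : (G.neighborFinset v).card = 2 := by
      rw [SimpleGraph.card_neighborFinset_eq_degree, h2]
    omega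
  have heq := Finset.eq_of_subset_of_card_le hsub hcard
  intro w
  rw [← SimpleGraph.mem_neighborFinset, ← heq]
  simp

lemma adj_iff_of_degree_one [Fintype V] (G : SimpleGraph V) [DecidableRel G.Adj]
    {v p : V} (hp : G.Adj v p) (h1 : G.degree v = 1) :
    ∀ w, G.Adj v w ↔ w = p := by
  classical
  have hsub : ({p} : Finset V) ⊆ G.neighborFinset v := by
    intro w hw
    simp only [Finset.mem_singleton] at hw
    subst hw; simp [SimpleGraph.mem_neighborFinset, hp]
  have hcard : (G.neighborFinset v).card ≤ ({p} : Finset V).card := by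
    rw [Finset.card_singleton]
    have : (G.neighborFinset v).card = 1 := by
      rw [SimpleGraph.card_neighborFinset_eq_degree, h1]
    omega
  have heq := Finset.eq_of_subset_of_card_le hsub hcard
  intro w
  rw [← SimpleGraph.mem_neighborFinset, ← heq]
  simp

theorem stmt_17 [Fintype V] (G : SimpleGraph V) [DecidableRel G.Adj]
    (U : Finset V) (hU : HasUniqueMaxOpenPacking G U)
    (x : V) (k : ℕ) (hk : 4 ≤ k) (u : ℕ → V)
    (hinj : ∀ i j, i < k → j < k → u i = u j → i = j)
    (hx : ∀ i, i < k → u i ≠ x)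
    (hadj0 : G.Adj x (u 0))
    (hadj : ∀ i, i + 1 < k → G.Adj (u i) (u (i + 1)))
    (hdeg2 : ∀ i, i < k - 1 → G.degree (u i) = 2)
    (hleaf : G.degree (u (k - 1)) = 1) :
    u (k - 2) ∈ U ∧ u (k - 1) ∈ U ∧ u (k - 4) ∉ U := by
  classical
  obtain ⟨m, rfl⟩ : ∃ m, k = m + 4 := ⟨k - 4, by omega⟩
  show u (m + 2) ∈ U ∧ u (m + 3) ∈ U ∧ u m ∉ U
  set a := u m with ha
  set b := u (m + 1) with hb
  set c := u (m + 2) with hc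
  set d := u (m + 3) with hd
  have hleaf' : G.degree d = 1 := hleaf
  -- distinctness
  have hne : ∀ i j, i < m + 4 → j < m + 4 → i ≠ j → u i ≠ u j :=
    fun i j hi hj hij h => hij (hinj i j hi hj h)
  have hab_ne : a ≠ b := hne m (m+1) (by omega) (by omega) (by omega)
  have hac_ne : a ≠ c := hne m (m+2) (by omega) (by omega) (by omega)
  have had_ne : a ≠ d := hne m (m+3) (by omega) (by omega) (by omega)
  have hbc_ne : b ≠ c := hne (m+1) (m+2) (by omega) (by omega) (by omega)
  have hbd_ne : b ≠ d := hne (m+1) (m+3) (by omega) (by omega) (by omega)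
  have hcd_ne : c ≠ d := hne (m+2) (m+3) (by omega) (by omega) (by omega)
  -- adjacencies
  have hab : G.Adj a b := hadj m (by omega)
  have hbc : G.Adj b c := hadj (m+1) (by omega)
  have hcd : G.Adj c d := hadj (m+2) (by omega)
  -- neighborhood descriptions
  have hNd : ∀ w, G.Adj d w ↔ w = c :=
    adj_iff_of_degree_one G hcd.symm hleaf'
  have hNc : ∀ w, G.Adj c w ↔ w = b ∨ w = d :=
    adj_iff_of_degree_two G hbd_ne hbc.symm hcd (hdeg2 (m+2) (by omega))
  have hNb : ∀ w, G.Adj b w ↔ w = a ∨ w = c :=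
    adj_iff_of_degree_two G hac_ne hab.symm hbc (hdeg2 (m+1) (by omega))
  -- forbidden pairs in any open packing
  have hU1 := hU.1
  have hac_not : ¬ (a ∈ U ∧ c ∈ U) := by
    rintro ⟨h1, h2⟩
    have hdisj := hU1 (by simpa using h1) (by simpa using h2) hac_ne
    exact Set.disjoint_left.mp hdisj
      (by simpa [SimpleGraph.mem_neighborSet] using hab)
      (by simp [SimpleGraph.mem_neighborSet, hNc b])
  have hbd_not : ¬ (b ∈ U ∧ d ∈ U) := by
    rintro ⟨h1, h2⟩
    have hdisj := hU1 (by simpa using h1) (by simpa using h2) hbd_ne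
    exact Set.disjoint_left.mp hdisj
      (by simpa [SimpleGraph.mem_neighborSet] using hbc)
      (by simp [SimpleGraph.mem_neighborSet, hNd c])
  -- the modified packing
  set T : Finset V := {a, b, c, d} with hT
  set S' : Finset V := (U \ T) ∪ {c, d} with hS'
  -- cardinality of intersection with T
  have hcap1 : (U ∩ ({a, c} : Finset V)).card ≤ 1 := by
    by_contra h
    push_neg at h
    have hsub : U ∩ ({a, c} : Finset V) ⊆ {a, c} := Finset.inter_subset_right
    have hcc : ({a, c} : Finset V).card ≤ (U ∩ ({a, c} : Finset V)).card := by
      have : ({a, c} : Finset V).card ≤ 2 := Finset.card_insert_le _ _ |>.trans (by simp)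
      omega
    have heq := Finset.eq_of_subset_of_card_le hsub hcc
    have h1 : a ∈ U := by
      have : a ∈ U ∩ ({a, c} : Finset V) := by rw [heq]; simp
      exact (Finset.mem_inter.mp this).1
    have h2 : c ∈ U := by
      have : c ∈ U ∩ ({a, c} : Finset V) := by rw [heq]; simp
      exact (Finset.mem_inter.mp this).1
    exact hac_not ⟨h1, h2⟩
  have hcap2 : (U ∩ ({b, d} : Finset V)).card ≤ 1 := by
    by_contra h
    push_neg at h
    have hsub : U ∩ ({b, d} : Finset V) ⊆ {b, d} := Finset.inter_subset_right
    have hcc : ({b, d} : Finset V).card ≤ (U ∩ ({b, d} : Finset V)).card := by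
      have : ({b, d} : Finset V).card ≤ 2 := Finset.card_insert_le _ _ |>.trans (by simp)
      omega
    have heq := Finset.eq_of_subset_of_card_le hsub hcc
    have h1 : b ∈ U := by
      have : b ∈ U ∩ ({b, d} : Finset V) := by rw [heq]; simp
      exact (Finset.mem_inter.mp this).1
    have h2 : d ∈ U := by
      have : d ∈ U ∩ ({b, d} : Finset V) := by rw [heq]; simp
      exact (Finset.mem_inter.mp this).1
    exact hbd_not ⟨h1, h2⟩
  have hTunion : T = ({a, c} : Finset V) ∪ ({b, d} : Finset V) := by
    ext w
    simp only [hT, Finset.mem_insert, Finset.mem_singleton, Finset.mem_union]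
    tauto
  have hUT2 : (U ∩ T).card ≤ 2 := by
    rw [hTunion, Finset.inter_union_distrib_left]
    calc ((U ∩ {a, c}) ∪ (U ∩ {b, d})).card
        ≤ (U ∩ ({a, c} : Finset V)).card + (U ∩ ({b, d} : Finset V)).card :=
          Finset.card_union_le _ _
      _ ≤ 2 := by omega
  -- cardinality of S'
  have hcdT : c ∈ T ∧ d ∈ T := by constructor <;> simp [hT]
  have hdisjcd : Disjoint (U \ T) ({c, d} : Finset V) := by
    rw [Finset.disjoint_right]
    intro w hw
    simp only [Finset.mem_insert, Finset.mem_singleton] at hw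
    rcases hw with rfl | rfl <;> simp [Finset.mem_sdiff, hcdT.1, hcdT.2]
  have hcardS' : U.card ≤ S'.card := by
    have h1 : S'.card = (U \ T).card + 2 := by
      rw [hS', Finset.card_union_of_disjoint hdisjcd,
        Finset.card_insert_of_notMem (by simpa using hcd_ne), Finset.card_singleton]
    have h2 : (U \ T).card + (U ∩ T).card = U.card := Finset.card_sdiff_add_card_inter U T
    omega
  -- S' is an open packing
  have memS' : ∀ w, w ∈ S' ↔ (w ∈ U ∧ w ∉ T) ∨ w = c ∨ w = d := by
    intro w
    simp only [hS', Finset.mem_union, Finset.mem_sdiff, Finset.mem_insert,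
      Finset.mem_singleton]
  have dNcd : Disjoint (G.neighborSet c) (G.neighborSet d) := by
    rw [Set.disjoint_left]
    intro z hz1 hz2
    rw [SimpleGraph.mem_neighborSet, hNc] at hz1
    rw [SimpleGraph.mem_neighborSet, hNd] at hz2
    subst hz2
    rcases hz1 with h | h
    · exact hbc_ne h.symm
    · exact hcd_ne h
  have dWc : ∀ w, w ∈ U → w ∉ T → Disjoint (G.neighborSet w) (G.neighborSet c) := by
    intro w hwU hwT
    rw [Set.disjoint_left]
    intro z hz1 hz2
    rw [SimpleGraph.mem_neighborSet] at hz1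
    rw [SimpleGraph.mem_neighborSet, hNc] at hz2
    rcases hz2 with rfl | rfl
    · have := (hNb w).mp hz1.symm
      apply hwT; rcases this with rfl | rfl <;> simp [hT]
    · have := (hNd w).mp hz1.symm
      apply hwT; subst this; simp [hT]
  have dWd : ∀ w, w ∈ U → w ∉ T → Disjoint (G.neighborSet w) (G.neighborSet d) := by
    intro w hwU hwT
    rw [Set.disjoint_left]
    intro z hz1 hz2
    rw [SimpleGraph.mem_neighborSet] at hz1
    rw [SimpleGraph.mem_neighborSet, hNd] at hz2
    subst hz2
    have := (hNc w).mp hz1.symm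
    apply hwT; rcases this with rfl | rfl <;> simp [hT]
  have hpack : IsOpenPacking G ↑S' := by
    intro w1 hw1 w2 hw2 h12
    simp only [Finset.coe_union, Finset.coe_sdiff, Set.mem_union, Finset.mem_coe] at hw1 hw2
    have hw1' : (w1 ∈ U ∧ w1 ∉ T) ∨ w1 = c ∨ w1 = d := by
      have := hw1; simpa [memS'] using (memS' w1).mp (by simpa [hS'] using hw1)
    have hw2' : (w2 ∈ U ∧ w2 ∉ T) ∨ w2 = c ∨ w2 = d := by
      simpa [memS'] using (memS' w2).mp (by simpa [hS'] using hw2)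
    rcases hw1' with ⟨h1U, h1T⟩ | rfl | rfl <;>
      rcases hw2' with ⟨h2U, h2T⟩ | rfl | rfl
    · exact hU1 (by simpa using h1U) (by simpa using h2U) h12
    · exact dWc w1 h1U h1T
    · exact dWd w1 h1U h1T
    · exact (dWc w2 h2U h2T).symm
    · exact absurd rfl h12
    · exact dNcd
    · exact (dWd w2 h2U h2T).symm
    · exact dNcd.symm
    · exact absurd rfl h12
  -- S' achieves the packing number
  have hbdd : BddAbove {n | ∃ S : Finset V, IsOpenPacking G ↑S ∧ S.card = n} := by
    refine ⟨Fintype.card V, ?_⟩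
    rintro n ⟨S, -, rfl⟩
    simpa using S.card_le_univ
  have hle : S'.card ≤ openPackingNumber G := le_csSup hbdd ⟨S', hpack, rfl⟩
  have heq : S'.card = openPackingNumber G :=
    le_antisymm hle (hU.2.1 ▸ hcardS')
  have hS'U : S' = U := hU.2.2 S' hpack heq
  refine ⟨?_, ?_, ?_⟩
  · have hcS : c ∈ S' := (memS' c).mpr (Or.inr (Or.inl rfl))
    rwa [hS'U] at hcS
  · have hdS : d ∈ S' := (memS' d).mpr (Or.inr (Or.inr rfl))
    rwa [hS'U] at hdS
  · intro h
    have haS : a ∈ S' := by rw [hS'U]; exact h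
    rcases (memS' a).mp haS with ⟨-, hT'⟩ | h1 | h1
    · exact hT' (by simp [hT])
    · exact hac_ne h1
    · exact had_ne h1
end
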